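/- In the Node Model, the degree-weighted average M(t) = Σ_{u∈V} (d_u/(2m))·ξ_u(t) is a martingale: E(M(t+1) | ξ(t)) = M(t). In particular E(M(t+1) | ξ(0)) = M(0), and for regular graphs E(M(t+1) | ξ(0)) = Avg(0) = (1/n)Σ_{u∈V} ξ_u(0). -/

import Mathlib

open MeasureTheory ProbabilityTheory Finset

instance finsetFinMeasurableSpace (n : ℕ) : MeasurableSpace (Finset (Fin n)) := ⊤

/-- A step of the Node Model: selected node together with the selected set of neighbours. -/
abbrev NodeStep (n : ℕ) := Fin n × Finset (Fin n)

/-- Distribution of a single step of the Node Model: a uniformly random node `u`,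
together with a uniformly random set of `k` of its neighbours. -/
noncomputable def nodeStepPMF {n : ℕ} (G : SimpleGraph (Fin n)) [DecidableRel G.Adj]
    (hn : Nonempty (Fin n)) (k : ℕ) (hk : ∀ u, k ≤ G.degree u) : PMF (NodeStep n) :=
  letI := hn
  (PMF.uniformOfFintype (Fin n)).bind fun u =>
    (PMF.uniformOfFinset ((G.neighborFinset u).powersetCard k)
      (Finset.powersetCard_nonempty.2 (hk u))).map fun S => (u, S)

/-- One update of the Node Model: the selected node `s.1` replaces its value by an
`α`-fraction of its own value plus a `(1-α)/k`-fraction of the values of the selected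
neighbours `s.2`. -/
noncomputable def nodeUpdate {n : ℕ} (α : ℝ) (k : ℕ) (s : NodeStep n) (ξ : Fin n → ℝ) :
    Fin n → ℝ :=
  fun w => if w = s.1 then α * ξ w + ((1 - α) / k) * ∑ v ∈ s.2, ξ v else ξ w

/-- The trajectory of node values of the Node Model, given the sequence of step choices. -/
noncomputable def nodeTraj {n : ℕ} (α : ℝ) (k : ℕ) (ξ0 : Fin n → ℝ)
    (ω : ℕ → NodeStep n) : ℕ → Fin n → ℝ
  | 0 => ξ0
  | t + 1 => nodeUpdate α k (ω t) (nodeTraj α k ξ0 ω t)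

/-- Stationary distribution of the lazy random walk: `π u = d_u / (2m)`. -/
noncomputable def piRW {n : ℕ} (G : SimpleGraph (Fin n)) [DecidableRel G.Adj] (u : Fin n) : ℝ :=
  (G.degree u : ℝ) / (2 * (G.edgeFinset.card : ℝ))

/-- The potential `φ(ξ) = (1/2) Σ_{u,v} π_u π_v (ξ_u - ξ_v)²`. -/
noncomputable def phi {n : ℕ} (G : SimpleGraph (Fin n)) [DecidableRel G.Adj]
    (ξ : Fin n → ℝ) : ℝ :=
  (1 / 2) * ∑ u, ∑ v, piRW G u * piRW G v * (ξ u - ξ v) ^ 2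

/-- Transition matrix of the lazy random walk on `G`. -/
noncomputable def lazyP {n : ℕ} (G : SimpleGraph (Fin n)) [DecidableRel G.Adj] :
    Matrix (Fin n) (Fin n) ℝ :=
  Matrix.of fun i j =>
    if i = j then 1 / 2 else if G.Adj i j then 1 / (2 * (G.degree i : ℝ)) else 0

/-- `lam` is the second-largest eigenvalue of the (reversible) lazy random-walk matrix `P`:
it is the largest eigenvalue attained on the space of vectors `π`-orthogonal to `1`. -/
def IsSecondEigenvalueP {n : ℕ} (G : SimpleGraph (Fin n)) [DecidableRel G.Adj]
    (lam : ℝ) : Prop :=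
  (∃ f : Fin n → ℝ, f ≠ 0 ∧ (lazyP G).mulVec f = lam • f ∧ ∑ x, piRW G x * f x = 0) ∧
  ∀ lam' : ℝ,
    (∃ f : Fin n → ℝ, f ≠ 0 ∧ (lazyP G).mulVec f = lam' • f ∧ ∑ x, piRW G x * f x = 0) →
      lam' ≤ lam

/-- The degree-weighted average `M(ξ) = Σ_u (d_u/(2m)) ξ_u`. -/
noncomputable def Mdeg {n : ℕ} (G : SimpleGraph (Fin n)) [DecidableRel G.Adj]
    (ξ : Fin n → ℝ) : ℝ :=
  ∑ u, piRW G u * ξ u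

/-- The plain average `Avg(ξ) = (1/n) Σ_u ξ_u`. -/
noncomputable def Avg {n : ℕ} (ξ : Fin n → ℝ) : ℝ :=
  (1 / (n : ℝ)) * ∑ u, ξ u

/-!
Let `π u = d_u / 2m`. If node `u` updates using the set `S` of `k` neighbours, `M` changes by
`(1 - α) π_u (mean_S ξ - ξ_u)`. Averaging over the uniformly random `k`-subset `S` replaces
`mean_S ξ` by the mean of `ξ` over all neighbours of `u`, and averaging over `u` then gives
`(1 - α)/n · (Σ_u π_u mean_{N(u)} ξ - M(ξ))`, which vanishes because `π` is stationary for the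
simple random walk. Along the trajectory, `ξ(t)` is a function of the first `t` steps, which are
independent of step `t`, so the one-step identity can be applied inside the expectation.
-/

open scoped ENNReal BigOperators

namespace Finset

variable {α K : Type*} [DecidableEq α]

theorem sum_powersetCard_sum {M : Type*} [AddCommMonoid M] (A : Finset α) {k : ℕ} (hk : 1 ≤ k)
    (f : α → M) :
    ∑ S ∈ A.powersetCard k, ∑ v ∈ S, f v = (#A - 1).choose (k - 1) • ∑ v ∈ A, f v := by
  rw [sum_comm' (t' := A) (s' := fun v => (A.powersetCard k).filter ({v} ⊆ ·))]
  · rw [smul_sum]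
    refine sum_congr rfl fun v hv => ?_
    rw [sum_const, card_filter_powersetCard_subset _ _ _ (singleton_subset_iff.2 hv)
      (by simpa using hk), card_singleton]
  · intro S v
    simp only [mem_filter, mem_powersetCard, singleton_subset_iff]
    exact ⟨fun ⟨hS, hv⟩ => ⟨⟨hS, hv⟩, hS.1 hv⟩, fun ⟨hS, _⟩ => hS⟩

theorem expect_powersetCard_expect [Field K] [CharZero K] (A : Finset α) {k : ℕ}
    (hk : 1 ≤ k) (hkA : k ≤ #A) (f : α → K) :
    𝔼 S ∈ A.powersetCard k, 𝔼 v ∈ S, f v = 𝔼 v ∈ A, f v := by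
  have hcard : ∀ S ∈ A.powersetCard k, 𝔼 v ∈ S, f v = (∑ v ∈ S, f v) / k := fun S hS => by
    rw [expect_eq_sum_div_card, (mem_powersetCard.1 hS).2]
  have hchoose : ((#A - 1).choose (k - 1) : K) * #A = (#A).choose k * k := by
    have h := Nat.add_one_mul_choose_eq (#A - 1) (k - 1)
    rw [Nat.sub_add_cancel (hk.trans hkA), Nat.sub_add_cancel hk] at h
    exact_mod_cast (mul_comm _ _).trans h
  rw [expect_congr rfl hcard, expect_eq_sum_div_card, ← sum_div, sum_powersetCard_sum A hk,
    card_powersetCard, expect_eq_sum_div_card, nsmul_eq_mul]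
  have h1 : ((#A).choose k : K) ≠ 0 := by exact_mod_cast (Nat.choose_pos hkA).ne'
  have h2 : (k : K) ≠ 0 := by exact_mod_cast (by omega : k ≠ 0)
  have h3 : (#A : K) ≠ 0 := by exact_mod_cast (by omega : #A ≠ 0)
  field_simp
  linear_combination (∑ v ∈ A, f v) * hchoose

end Finset

theorem SimpleGraph.sum_sum_neighborFinset {V M : Type*} [Fintype V] [AddCommMonoid M]
    (G : SimpleGraph V) [DecidableRel G.Adj] (f : V → M) :
    ∑ u, ∑ v ∈ G.neighborFinset u, f v = ∑ v, G.degree v • f v := by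
  rw [sum_comm' (t' := univ) (s' := fun v => G.neighborFinset v)]
  · simp
  · simp [G.adj_comm]

theorem ProbabilityTheory.IndepFun.integral_comp_eq_integral_sum_pmf
    {Ω S T : Type*} [MeasurableSpace Ω] {P : Measure Ω} [IsProbabilityMeasure P]
    [Fintype S] [MeasurableSpace S] [MeasurableSingletonClass S]
    [Fintype T] [MeasurableSpace T] [MeasurableSingletonClass T]
    {X : Ω → S} {Y : Ω → T} (hYX : IndepFun Y X P) (hX : Measurable X) (hY : Measurable Y)
    {p : PMF S} (hlaw : P.map X = p.toMeasure) (f : T → S → ℝ) :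
    ∫ ω, f (Y ω) (X ω) ∂P = ∫ ω, ∑ s, (p s).toReal * f (Y ω) s ∂P := by
  have := Measure.isProbabilityMeasure_map (μ := P) hY.aemeasurable
  have hjoint : P.map (fun ω => (Y ω, X ω)) = (P.map Y).prod p.toMeasure := by
    rw [hYX.map_prod_eq_prod_map_map hY.aemeasurable hX.aemeasurable, hlaw]
  calc ∫ ω, f (Y ω) (X ω) ∂P = ∫ z, f z.1 z.2 ∂(P.map fun ω => (Y ω, X ω)) :=
        (integral_map (hY.prodMk hX).aemeasurable
          (measurable_of_countable fun z : T × S => f z.1 z.2).aestronglyMeasurable).symm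
    _ = ∫ y, ∫ s, f y s ∂p.toMeasure ∂(P.map Y) := by
        rw [hjoint, integral_prod _ .of_finite]
    _ = ∫ ω, ∑ s, (p s).toReal * f (Y ω) s ∂P := by
        simp only [PMF.integral_eq_sum, smul_eq_mul]
        exact integral_map hY.aemeasurable (measurable_of_countable _).aestronglyMeasurable

instance (n : ℕ) : DiscreteMeasurableSpace (Finset (Fin n)) :=
  ⟨fun _ => MeasurableSpace.measurableSet_top⟩

section NodeModel

variable {n : ℕ} (G : SimpleGraph (Fin n)) [DecidableRel G.Adj]

theorem nodeStepPMF_apply (hn : Nonempty (Fin n)) (k : ℕ) (hk : ∀ u, k ≤ G.degree u)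
    (u : Fin n) (S : Finset (Fin n)) :
    nodeStepPMF G hn k hk (u, S) = (n : ℝ≥0∞)⁻¹ *
      if S ∈ (G.neighborFinset u).powersetCard k then ((G.degree u).choose k : ℝ≥0∞)⁻¹
      else 0 := by
  simp [nodeStepPMF, PMF.bind_apply, PMF.map_apply, tsum_fintype, ite_and]

theorem sum_nodeStepPMF_mul (hn : Nonempty (Fin n)) (k : ℕ) (hk : ∀ u, k ≤ G.degree u)
    (g : NodeStep n → ℝ) :
    ∑ s, (nodeStepPMF G hn k hk s).toReal * g s =
      𝔼 u, 𝔼 S ∈ (G.neighborFinset u).powersetCard k, g (u, S) := by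
  simp only [Fintype.sum_prod_type, nodeStepPMF_apply, expect_eq_sum_div_card,
    card_powersetCard, SimpleGraph.card_neighborFinset_eq_degree, card_univ, Fintype.card_fin,
    sum_div, div_div]
  refine sum_congr rfl fun u _ => ?_
  rw [← Fintype.sum_ite_mem ((G.neighborFinset u).powersetCard k)]
  refine sum_congr rfl fun S _ => ?_
  split_ifs <;> simp [div_eq_inv_mul, mul_comm]

theorem piRW_mul_expect_neighborFinset (u : Fin n) (f : Fin n → ℝ) :
    piRW G u * 𝔼 v ∈ G.neighborFinset u, f v =
      (∑ v ∈ G.neighborFinset u, f v) / (2 * #G.edgeFinset) := by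
  rw [piRW, expect_eq_sum_div_card, SimpleGraph.card_neighborFinset_eq_degree]
  rcases eq_or_ne (G.degree u) 0 with hu | hu
  · rw [← SimpleGraph.card_neighborFinset_eq_degree, card_eq_zero] at hu
    simp [hu]
  · field_simp

theorem sum_piRW_mul_expect_neighborFinset (f : Fin n → ℝ) :
    ∑ u, piRW G u * 𝔼 v ∈ G.neighborFinset u, f v = Mdeg G f := by
  rw [sum_congr rfl fun u _ => piRW_mul_expect_neighborFinset G u f, ← sum_div,
    G.sum_sum_neighborFinset, Mdeg, sum_div]
  simp only [piRW, nsmul_eq_mul, div_mul_eq_mul_div]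

theorem Mdeg_nodeUpdate (α : ℝ) {k : ℕ} (u : Fin n) {S : Finset (Fin n)} (hS : #S = k)
    (ξ : Fin n → ℝ) :
    Mdeg G (nodeUpdate α k (u, S) ξ) =
      Mdeg G ξ + (1 - α) * piRW G u * (𝔼 v ∈ S, ξ v - ξ u) := by
  have h : ∀ w, piRW G w * nodeUpdate α k (u, S) ξ w = piRW G w * ξ w +
      if w = u then (1 - α) * piRW G u * (𝔼 v ∈ S, ξ v - ξ u) else 0 := by
    intro w
    rw [nodeUpdate, expect_eq_sum_div_card, hS]
    split_ifs with hw
    · subst hw; ring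
    · ring
  simp only [Mdeg, h, sum_add_distrib, sum_ite_eq', mem_univ, if_true]

theorem expect_Mdeg_nodeUpdate_powersetCard (α : ℝ) {k : ℕ} (hk1 : 1 ≤ k) (u : Fin n)
    (hku : k ≤ G.degree u) (ξ : Fin n → ℝ) :
    𝔼 S ∈ (G.neighborFinset u).powersetCard k, Mdeg G (nodeUpdate α k (u, S) ξ) =
      Mdeg G ξ + (1 - α) * piRW G u * (𝔼 v ∈ G.neighborFinset u, ξ v - ξ u) := by
  rw [← SimpleGraph.card_neighborFinset_eq_degree] at hku
  rw [expect_congr rfl fun S hS => Mdeg_nodeUpdate G α u (mem_powersetCard.1 hS).2 ξ,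
    expect_add_distrib, ← mul_expect, expect_sub_distrib,
    (G.neighborFinset u).expect_powersetCard_expect hk1 hku]
  simp only [expect_const (powersetCard_nonempty.2 hku)]

theorem sum_nodeStepPMF_mul_Mdeg_nodeUpdate (hn : Nonempty (Fin n)) (α : ℝ) {k : ℕ}
    (hk1 : 1 ≤ k) (hk : ∀ u, k ≤ G.degree u) (ξ : Fin n → ℝ) :
    ∑ s, (nodeStepPMF G hn k hk s).toReal * Mdeg G (nodeUpdate α k s ξ) = Mdeg G ξ := by
  have hdrift : 𝔼 u, piRW G u * (𝔼 v ∈ G.neighborFinset u, ξ v - ξ u) = 0 := by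
    simp only [mul_sub, expect_sub_distrib, Fintype.expect_eq_sum_div_card,
      sum_piRW_mul_expect_neighborFinset, Mdeg, sub_self]
  rw [sum_nodeStepPMF_mul, expect_congr rfl fun u _ =>
    expect_Mdeg_nodeUpdate_powersetCard G α hk1 u (hk u) ξ, expect_add_distrib,
    expect_const (univ_nonempty_iff.2 hn)]
  simp only [mul_assoc, ← mul_expect, hdrift, mul_zero, add_zero]

theorem nodeTraj_dependsOn (α : ℝ) (k : ℕ) (ξ0 : Fin n → ℝ) (t : ℕ) :
    DependsOn (fun ω : ℕ → NodeStep n => nodeTraj α k ξ0 ω t) (range t : Set ℕ) := by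
  induction t with
  | zero => exact fun _ _ _ => rfl
  | succ t ih =>
    intro ω ω' h
    have hlt : ∀ i ∈ (range t : Set ℕ), ω i = ω' i := fun i hi =>
      h i (by simp only [coe_range, Set.mem_Iio] at hi ⊢; omega)
    simp only [nodeTraj, ih hlt, h t (by simp)]

theorem integral_Mdeg_nodeTraj_succ {Ω : Type*} [MeasurableSpace Ω] {P : Measure Ω}
    (hn : Nonempty (Fin n)) (α : ℝ) {k : ℕ} (hk1 : 1 ≤ k) (hk : ∀ u, k ≤ G.degree u)
    (ξ0 : Fin n → ℝ) {steps : ℕ → Ω → NodeStep n} (hmeas : ∀ t, Measurable (steps t))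
    (hiid : iIndepFun steps P) (t : ℕ)
    (hdist : P.map (steps t) = (nodeStepPMF G hn k hk).toMeasure) :
    ∫ ω, Mdeg G (nodeTraj α k ξ0 (fun s => steps s ω) (t + 1)) ∂P =
      ∫ ω, Mdeg G (nodeTraj α k ξ0 (fun s => steps s ω) t) ∂P := by
  have := hiid.isProbabilityMeasure
  obtain ⟨g, hg⟩ := dependsOn_iff_exists_comp.1 (nodeTraj_dependsOn α k ξ0 t)
  set Y : Ω → range t → NodeStep n := fun ω i => steps i ω
  have hYX : IndepFun Y (steps t) P :=
    (hiid.indepFun_finset (range t) {t} (by simp) hmeas).comp measurable_id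
      (measurable_pi_apply (⟨t, mem_singleton_self t⟩ : ({t} : Finset ℕ)))
  have htraj : ∀ ω, nodeTraj α k ξ0 (fun s => steps s ω) t = g (Y ω) :=
    fun ω => congrFun hg _
  calc ∫ ω, Mdeg G (nodeTraj α k ξ0 (fun s => steps s ω) (t + 1)) ∂P
      = ∫ ω, Mdeg G (nodeUpdate α k (steps t ω) (g (Y ω))) ∂P := by simp only [nodeTraj, htraj]
    _ = ∫ ω, ∑ s, (nodeStepPMF G hn k hk s).toReal * Mdeg G (nodeUpdate α k s (g (Y ω))) ∂P :=
        hYX.integral_comp_eq_integral_sum_pmf (hmeas t) (measurable_pi_lambda _ fun i => hmeas i)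
          hdist fun y s => Mdeg G (nodeUpdate α k s (g y))
    _ = ∫ ω, Mdeg G (nodeTraj α k ξ0 (fun s => steps s ω) t) ∂P := by
        simp only [sum_nodeStepPMF_mul_Mdeg_nodeUpdate G hn α hk1 hk, htraj]

theorem integral_Mdeg_nodeTraj {Ω : Type*} [MeasurableSpace Ω] {P : Measure Ω}
    (hn : Nonempty (Fin n)) (α : ℝ) {k : ℕ} (hk1 : 1 ≤ k) (hk : ∀ u, k ≤ G.degree u)
    (ξ0 : Fin n → ℝ) {steps : ℕ → Ω → NodeStep n} (hmeas : ∀ t, Measurable (steps t))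
    (hiid : iIndepFun steps P)
    (hdist : ∀ t, P.map (steps t) = (nodeStepPMF G hn k hk).toMeasure) (t : ℕ) :
    ∫ ω, Mdeg G (nodeTraj α k ξ0 (fun s => steps s ω) t) ∂P = Mdeg G ξ0 := by
  have := hiid.isProbabilityMeasure
  induction t with
  | zero => simp [nodeTraj]
  | succ t ih =>
    rw [integral_Mdeg_nodeTraj_succ G hn α hk1 hk ξ0 hmeas hiid t (hdist t), ih]

theorem Mdeg_eq_Avg_of_isRegularOfDegree {d : ℕ} (hd : G.IsRegularOfDegree d) (hd0 : d ≠ 0)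
    (ξ : Fin n → ℝ) : Mdeg G ξ = Avg ξ := by
  have hedges : (2 * #G.edgeFinset : ℝ) = n * d := by
    rw [← Nat.cast_ofNat, ← Nat.cast_mul, ← G.sum_degrees_eq_twice_card_edges]
    simp [hd.degree_eq]
  have hd0' : (d : ℝ) ≠ 0 := Nat.cast_ne_zero.2 hd0
  simp only [Mdeg, Avg, piRW, hd.degree_eq, hedges, mul_sum, div_mul_cancel_right₀ hd0', one_div]

end NodeModel

theorem node_model_M_martingale_general {n : ℕ} (G : SimpleGraph (Fin n)) [DecidableRel G.Adj]
    (hconn : G.Connected) (α : ℝ)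
    (k : ℕ) (hk1 : 1 ≤ k) (hk : ∀ u, k ≤ G.degree u)
    (ξ0 : Fin n → ℝ)
    (Ω : Type) (mΩ : MeasurableSpace Ω) (Pr : Measure Ω)
    (steps : ℕ → Ω → NodeStep n) (hmeas : ∀ t, Measurable (steps t))
    (hiid : iIndepFun steps Pr)
    (hdist : ∀ t, Measure.map (steps t) Pr = (nodeStepPMF G hconn.nonempty k hk).toMeasure) :
    (∀ ξ : Fin n → ℝ,
        ∑ s : NodeStep n, ((nodeStepPMF G hconn.nonempty k hk) s).toReal *
          Mdeg G (nodeUpdate α k s ξ) = Mdeg G ξ) ∧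
    (∀ t : ℕ, ∫ ω, Mdeg G (nodeTraj α k ξ0 (fun s => steps s ω) (t + 1)) ∂Pr = Mdeg G ξ0) ∧
    (∀ d : ℕ, G.IsRegularOfDegree d →
      ∀ t : ℕ, ∫ ω, Mdeg G (nodeTraj α k ξ0 (fun s => steps s ω) (t + 1)) ∂Pr = Avg ξ0) := by
  have hM := integral_Mdeg_nodeTraj G hconn.nonempty α hk1 hk ξ0 hmeas hiid hdist
  refine ⟨sum_nodeStepPMF_mul_Mdeg_nodeUpdate G hconn.nonempty α hk1 hk,
    fun t => hM (t + 1), fun d hd t => ?_⟩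
  obtain ⟨u⟩ := hconn.nonempty
  have hd0 : d ≠ 0 := by have := hk u; rw [hd.degree_eq] at this; omega
  rw [hM, Mdeg_eq_Avg_of_isRegularOfDegree G hd hd0]

/-- **Lemma 1 (martingale property of the Node Model).**
The degree-weighted average `M(t) = Σ_u (d_u/(2m)) ξ_u(t)` is a martingale:
`E(M(t+1) | ξ(t)) = M(t)` (first conjunct: the expectation of `M` after one random step
from any current state `ξ` equals `M(ξ)`); in particular `E(M(t+1) | ξ(0)) = M(0)`
(second conjunct), and for regular graphs `E(M(t+1) | ξ(0)) = Avg(0)` (third conjunct). -/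
theorem node_model_M_martingale {n : ℕ} (G : SimpleGraph (Fin n)) [DecidableRel G.Adj]
    (hconn : G.Connected) (α : ℝ) (hα : α ∈ Set.Ioo (0 : ℝ) 1)
    (k : ℕ) (hk1 : 1 ≤ k) (hk : ∀ u, k ≤ G.degree u)
    (ξ0 : Fin n → ℝ)
    (Ω : Type) (mΩ : MeasurableSpace Ω) (Pr : Measure Ω) (hPr : IsProbabilityMeasure Pr)
    (steps : ℕ → Ω → NodeStep n) (hmeas : ∀ t, Measurable (steps t))
    (hiid : iIndepFun steps Pr)
    (hdist : ∀ t, Measure.map (steps t) Pr = (nodeStepPMF G hconn.nonempty k hk).toMeasure) :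
    (∀ ξ : Fin n → ℝ,
        ∑ s : NodeStep n, ((nodeStepPMF G hconn.nonempty k hk) s).toReal *
          Mdeg G (nodeUpdate α k s ξ) = Mdeg G ξ) ∧
    (∀ t : ℕ, ∫ ω, Mdeg G (nodeTraj α k ξ0 (fun s => steps s ω) (t + 1)) ∂Pr = Mdeg G ξ0) ∧
    (∀ d : ℕ, G.IsRegularOfDegree d →
      ∀ t : ℕ, ∫ ω, Mdeg G (nodeTraj α k ξ0 (fun s => steps s ω) (t + 1)) ∂Pr = Avg ξ0) :=
  node_model_M_martingale_general G hconn α k hk1 hk ξ0 Ω mΩ Pr steps hmeas hiid hdist
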